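/- Let ρ < 0 and μ ≠ 0, and let t₊ < 0 < 1 < t₋ be the two solutions of μ² = ρt(1 − t), with x₊ = e^{t₊} < 1 < x₋ = e^{t₋}. The function g(x) := x²·(μ² + ρ(1 − log x)²) is strictly decreasing on (0, x₊], strictly increasing on [x₊, x₋], and strictly decreasing on [x₋, ∞); moreover g(x₊) = ρ·x₊²·(1 − t₊) < 0, g(x₋) = ρ·x₋²·log x₊ > 0, g(x) → 0 as x → 0⁺ and g(x) → −∞ as x → ∞. Consequently, for every d with 0 < d < ρ·x₋²·log x₊, the set {x > 0 : g(x) = d} has exactly two elements, one in (x₊, x₋) and one in (x₋, ∞), and for d > ρ·x₋²·log x₊ it is empty. -/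

import Mathlib

/-- `g(x) = F(x,0) = x²(μ² + ρ(1 − log x)²)`, where `F` is the first integral of the
phase-plane system associated to the curvature energy `Θ_μ` in the 2-space form of
curvature `ρ`. -/
noncomputable def gfun (μ ρ x : ℝ) : ℝ :=
  x ^ 2 * (μ ^ 2 + ρ * (1 - Real.log x) ^ 2)

/-!
Since `t₊ + t₋ = 1` and `μ² = ρ t₊ t₋`, one has `g'(x) = 2ρx (log x − t₊)(log x − t₋)`, which
gives the three monotonicity intervals, and
`g(x) = ρx² ((log x − t₊)(log x − t₋) + 1 − log x)`, which gives the values at `x₊`, `x₋` and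
the negativity of `g` on `(0, x₊]`. Hence `g(x₋)` is the maximum of `g` on `(0, ∞)`, and a level
`0 < d < g(x₋)` is attained exactly once on `(x₊, x₋)` and once on `(x₋, ∞)`.
-/

open Real Set Filter Topology

section Profile

variable {f : ℝ → ℝ} {a b : ℝ}

theorem apply_le_of_monotoneOn_Icc_of_antitoneOn_Ici (hab : a ≤ b)
    (hmono : MonotoneOn f (Icc a b)) (hanti : AntitoneOn f (Ici b))
    (hleft : ∀ x ∈ Ioc 0 a, f x ≤ f b) {x : ℝ} (hx : 0 < x) : f x ≤ f b := by
  rcases le_or_gt x a with hxa | hax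
  · exact hleft x ⟨hx, hxa⟩
  rcases le_or_gt x b with hxb | hbx
  · exact hmono ⟨hax.le, hxb⟩ ⟨hab, le_rfl⟩ hxb
  · exact hanti (mem_Ici.2 le_rfl) hbx.le hbx.le

theorem exists_two_eq_iff_of_strictMonoOn_Icc_of_strictAntiOn_Ici {d : ℝ} (ha : 0 < a)
    (hab : a ≤ b) (hf : ContinuousOn f (Ici a)) (hmono : StrictMonoOn f (Icc a b))
    (hanti : StrictAntiOn f (Ici b)) (hlim : Tendsto f atTop atBot)
    (hleft : ∀ x ∈ Ioc 0 a, f x < d) (hd : d < f b) :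
    ∃ x₁ x₂, x₁ ∈ Ioo a b ∧ x₂ ∈ Ioi b ∧ ∀ x, 0 < x → (f x = d ↔ x = x₁ ∨ x = x₂) := by
  obtain ⟨x₁, hx₁, hfx₁⟩ := intermediate_value_Ioo hab (hf.mono Icc_subset_Ici_self)
    ⟨hleft a ⟨ha, le_rfl⟩, hd⟩
  obtain ⟨N, hfN, hbN⟩ := ((hlim.eventually (eventually_lt_atBot d)).and
    (eventually_gt_atTop b)).exists
  obtain ⟨x₂, hx₂, hfx₂⟩ := intermediate_value_Ioo' hbN.le
    (hf.mono (Icc_subset_Ici_self.trans (Ici_subset_Ici.2 hab))) ⟨hfN, hd⟩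
  refine ⟨x₁, x₂, hx₁, hx₂.1, fun x hx => ⟨fun hfx => ?_, ?_⟩⟩
  · rcases le_or_gt x a with hxa | hax
    · exact absurd hfx (hleft x ⟨hx, hxa⟩).ne
    rcases le_or_gt x b with hxb | hbx
    · exact Or.inl (hmono.injOn ⟨hax.le, hxb⟩ (Ioo_subset_Icc_self hx₁) (hfx.trans hfx₁.symm))
    · exact Or.inr (hanti.injOn hbx.le hx₂.1.le (hfx.trans hfx₂.symm))
  · rintro (rfl | rfl) <;> assumption

end Profile

theorem add_eq_one_of_eq_mul_one_sub {μ ρ s t : ℝ} (hρ : ρ ≠ 0) (hst : s ≠ t)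
    (hs : μ ^ 2 = ρ * s * (1 - s)) (ht : μ ^ 2 = ρ * t * (1 - t)) : s + t = 1 := by
  have h : ρ * ((s - t) * (1 - s - t)) = 0 := by linear_combination ht - hs
  rcases mul_eq_zero.1 (mul_eq_zero.1 h |>.resolve_left hρ) with h | h
  · exact absurd (sub_eq_zero.1 h) hst
  · linarith

section Gfun

variable {μ ρ tp tm : ℝ}

theorem continuous_gfun (μ ρ : ℝ) : Continuous (gfun μ ρ) := by
  have h : gfun μ ρ = fun x => μ ^ 2 * x ^ 2 + ρ * (x - x * log x) ^ 2 :=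
    funext fun x => by unfold gfun; ring
  rw [h]
  fun_prop

theorem hasDerivAt_gfun {x : ℝ} (hx : 0 < x) :
    HasDerivAt (gfun μ ρ) (2 * x * (μ ^ 2 + ρ * (1 - log x) ^ 2 - ρ * (1 - log x))) x := by
  have hlog : HasDerivAt (fun y => μ ^ 2 + ρ * (1 - log y) ^ 2)
      (ρ * (2 * (1 - log x) * (-x⁻¹))) x :=
    ((((hasDerivAt_log hx.ne').const_sub 1).pow 2).const_mul ρ).const_add _ |>.congr_deriv
      (by simp)
  refine ((hasDerivAt_pow 2 x).mul hlog).congr_deriv ?_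
  field_simp
  ring

theorem gfun_eq_of_roots (hsum : tp + tm = 1) (hroots : μ ^ 2 = ρ * tp * tm) (x : ℝ) :
    gfun μ ρ x = ρ * x ^ 2 * ((log x - tp) * (log x - tm) + (1 - log x)) := by
  unfold gfun
  linear_combination x ^ 2 * hroots + ρ * x ^ 2 * log x * hsum

theorem hasDerivAt_gfun_of_roots (hsum : tp + tm = 1) (hroots : μ ^ 2 = ρ * tp * tm) {x : ℝ}
    (hx : 0 < x) : HasDerivAt (gfun μ ρ) (2 * x * ρ * (log x - tp) * (log x - tm)) x :=
  (hasDerivAt_gfun hx).congr_deriv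
    (by linear_combination 2 * x * hroots + 2 * x * ρ * log x * hsum)

theorem gfun_exp_of_roots (hsum : tp + tm = 1) (hroots : μ ^ 2 = ρ * tp * tm) :
    gfun μ ρ (exp tp) = ρ * exp tp ^ 2 * (1 - tp) := by
  simp [gfun_eq_of_roots hsum hroots]

theorem gfun_neg_of_le_exp (hρ : ρ < 0) (htptm : tp ≤ tm) (hsum : tp + tm = 1)
    (hroots : μ ^ 2 = ρ * tp * tm) {x : ℝ} (hx : 0 < x) (hxp : x ≤ exp tp) :
    gfun μ ρ x < 0 := by
  have hlog : log x ≤ tp := (log_le_iff_le_exp hx).2 hxp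
  rw [gfun_eq_of_roots hsum hroots]
  exact mul_neg_of_neg_of_pos (mul_neg_of_neg_of_pos hρ (by positivity))
    (add_pos_of_nonneg_of_pos (mul_nonneg_of_nonpos_of_nonpos (by linarith) (by linarith))
      (by linarith))

theorem strictAntiOn_gfun_of_forall_pos {s : Set ℝ} (hs : Convex ℝ s) (hρ : ρ < 0)
    (hsum : tp + tm = 1) (hroots : μ ^ 2 = ρ * tp * tm)
    (hpos : ∀ x ∈ interior s, 0 < x ∧ 0 < (log x - tp) * (log x - tm)) :
    StrictAntiOn (gfun μ ρ) s := by
  refine strictAntiOn_of_deriv_neg hs (continuous_gfun μ ρ).continuousOn fun x hx => ?_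
  obtain ⟨hx0, hprod⟩ := hpos x hx
  rw [(hasDerivAt_gfun_of_roots hsum hroots hx0).deriv, mul_assoc]
  exact mul_neg_of_neg_of_pos (mul_neg_of_pos_of_neg (by positivity) hρ) hprod

theorem strictMonoOn_gfun_of_forall_neg {s : Set ℝ} (hs : Convex ℝ s) (hρ : ρ < 0)
    (hsum : tp + tm = 1) (hroots : μ ^ 2 = ρ * tp * tm)
    (hneg : ∀ x ∈ interior s, 0 < x ∧ (log x - tp) * (log x - tm) < 0) :
    StrictMonoOn (gfun μ ρ) s := by
  refine strictMonoOn_of_deriv_pos hs (continuous_gfun μ ρ).continuousOn fun x hx => ?_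
  obtain ⟨hx0, hprod⟩ := hneg x hx
  rw [(hasDerivAt_gfun_of_roots hsum hroots hx0).deriv, mul_assoc]
  exact mul_pos_of_neg_of_neg (mul_neg_of_pos_of_neg (by positivity) hρ) hprod

theorem strictAntiOn_gfun_Ioc (hρ : ρ < 0) (htptm : tp ≤ tm) (hsum : tp + tm = 1)
    (hroots : μ ^ 2 = ρ * tp * tm) : StrictAntiOn (gfun μ ρ) (Ioc 0 (exp tp)) := by
  refine strictAntiOn_gfun_of_forall_pos (convex_Ioc _ _) hρ hsum hroots fun x hx => ?_
  rw [interior_Ioc] at hx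
  have hlog : log x < tp := (log_lt_iff_lt_exp hx.1).2 hx.2
  exact ⟨hx.1, mul_pos_of_neg_of_neg (by linarith) (by linarith)⟩

theorem strictMonoOn_gfun_Icc (hρ : ρ < 0) (hsum : tp + tm = 1) (hroots : μ ^ 2 = ρ * tp * tm) :
    StrictMonoOn (gfun μ ρ) (Icc (exp tp) (exp tm)) := by
  refine strictMonoOn_gfun_of_forall_neg (convex_Icc _ _) hρ hsum hroots fun x hx => ?_
  rw [interior_Icc] at hx
  have hx0 : 0 < x := (exp_pos tp).trans hx.1
  have hlogp : tp < log x := (lt_log_iff_exp_lt hx0).2 hx.1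
  have hlogm : log x < tm := (log_lt_iff_lt_exp hx0).2 hx.2
  exact ⟨hx0, mul_neg_of_pos_of_neg (by linarith) (by linarith)⟩

theorem strictAntiOn_gfun_Ici (hρ : ρ < 0) (htptm : tp ≤ tm) (hsum : tp + tm = 1)
    (hroots : μ ^ 2 = ρ * tp * tm) : StrictAntiOn (gfun μ ρ) (Ici (exp tm)) := by
  refine strictAntiOn_gfun_of_forall_pos (convex_Ici _) hρ hsum hroots fun x hx => ?_
  rw [interior_Ici] at hx
  have hx0 : 0 < x := (exp_pos tm).trans hx
  have hlog : tm < log x := (lt_log_iff_exp_lt hx0).2 hx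
  exact ⟨hx0, mul_pos (by linarith) (by linarith)⟩

theorem tendsto_gfun_nhdsGT_zero (μ ρ : ℝ) : Tendsto (gfun μ ρ) (𝓝[>] 0) (𝓝 0) := by
  have h := (continuous_gfun μ ρ).tendsto 0
  rw [show gfun μ ρ 0 = 0 by simp [gfun]] at h
  exact h.mono_left nhdsWithin_le_nhds

theorem tendsto_gfun_atTop_atBot (μ : ℝ) (hρ : ρ < 0) : Tendsto (gfun μ ρ) atTop atBot := by
  have hsq : Tendsto (fun x => (1 - log x) ^ 2) atTop atTop :=
    ((tendsto_pow_atTop two_ne_zero).comp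
      (tendsto_atTop_add_const_right _ (-1) tendsto_log_atTop)).congr fun x => by
        simp only [Function.comp]; ring
  exact (tendsto_pow_atTop two_ne_zero).atTop_mul_atBot₀
    (tendsto_atBot_add_const_left _ _ (hsq.const_mul_atTop_of_neg hρ))

end Gfun

theorem orbit_axis_cuts_hyperbolic_general (μ ρ : ℝ) (hρ : ρ < 0)
    (tp tm : ℝ) (htp : tp < 0) (htm : 1 < tm)
    (hsol : ∀ t : ℝ, μ ^ 2 = ρ * t * (1 - t) ↔ t = tp ∨ t = tm)
    (xp xm : ℝ) (hxp : xp = Real.exp tp) (hxm : xm = Real.exp tm) :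
    StrictAntiOn (gfun μ ρ) (Set.Ioc 0 xp) ∧
    StrictMonoOn (gfun μ ρ) (Set.Icc xp xm) ∧
    StrictAntiOn (gfun μ ρ) (Set.Ici xm) ∧
    (gfun μ ρ xp = ρ * xp ^ 2 * (1 - tp) ∧ gfun μ ρ xp < 0) ∧
    (gfun μ ρ xm = ρ * xm ^ 2 * Real.log xp ∧ 0 < gfun μ ρ xm) ∧
    Filter.Tendsto (gfun μ ρ) (nhdsWithin 0 (Set.Ioi 0)) (nhds 0) ∧
    Filter.Tendsto (gfun μ ρ) Filter.atTop Filter.atBot ∧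
    (∀ d : ℝ, 0 < d → d < ρ * xm ^ 2 * Real.log xp →
      ∃ a b : ℝ, a ∈ Set.Ioo xp xm ∧ b ∈ Set.Ioi xm ∧
        ∀ x : ℝ, 0 < x → (gfun μ ρ x = d ↔ x = a ∨ x = b)) ∧
    (∀ d : ℝ, ρ * xm ^ 2 * Real.log xp < d → ∀ x : ℝ, 0 < x → gfun μ ρ x ≠ d) := by
  have hsum : tp + tm = 1 := add_eq_one_of_eq_mul_one_sub hρ.ne (by linarith)
    ((hsol tp).2 (Or.inl rfl)) ((hsol tm).2 (Or.inr rfl))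
  have hroots : μ ^ 2 = ρ * tp * tm := by
    linear_combination (hsol tp).2 (Or.inl rfl) - ρ * tp * hsum
  have htptm : tp ≤ tm := by linarith
  subst hxp hxm
  have hmono := strictMonoOn_gfun_Icc hρ hsum hroots
  have hanti₂ := strictAntiOn_gfun_Ici hρ htptm hsum hroots
  have hxm : gfun μ ρ (exp tm) = ρ * exp tm ^ 2 * log (exp tp) := by
    rw [gfun_exp_of_roots (tp := tm) (tm := tp) (by linarith) (by linear_combination hroots),
      log_exp]
    linear_combination (-ρ * exp tm ^ 2) * hsum
  have hxm_pos : 0 < gfun μ ρ (exp tm) := by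
    rw [hxm, log_exp]
    exact mul_pos_of_neg_of_neg (mul_neg_of_neg_of_pos hρ (by positivity)) htp
  have hleft x (hx : x ∈ Ioc 0 (exp tp)) : gfun μ ρ x < 0 :=
    gfun_neg_of_le_exp hρ htptm hsum hroots hx.1 hx.2
  have hab : exp tp ≤ exp tm := exp_le_exp.2 htptm
  refine ⟨strictAntiOn_gfun_Ioc hρ htptm hsum hroots, hmono, hanti₂, ⟨gfun_exp_of_roots hsum hroots,
    hleft _ ⟨exp_pos tp, le_rfl⟩⟩, ⟨hxm, hxm_pos⟩, tendsto_gfun_nhdsGT_zero μ ρ,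
    tendsto_gfun_atTop_atBot μ hρ, fun d hd₀ hd => ?_, fun d hd x hx => ?_⟩
  · rw [← hxm] at hd
    exact exists_two_eq_iff_of_strictMonoOn_Icc_of_strictAntiOn_Ici (exp_pos tp) hab
      (continuous_gfun μ ρ).continuousOn hmono hanti₂ (tendsto_gfun_atTop_atBot μ hρ)
      (fun x hx => (hleft x hx).trans hd₀) hd
  · rw [← hxm] at hd
    exact (lt_of_le_of_lt (apply_le_of_monotoneOn_Icc_of_antitoneOn_Ici hab hmono.monotoneOn
      hanti₂.antitoneOn (fun x hx => ((hleft x hx).trans hxm_pos).le) hx) hd).ne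

/-- For `ρ < 0` and `μ ≠ 0`, let `t₊ < 0 < 1 < t₋` be the two solutions of
`μ² = ρt(1 − t)`, and `x₊ = e^{t₊} < 1 < x₋ = e^{t₋}`. Then
`g(x) = x²(μ² + ρ(1 − log x)²)` is strictly decreasing on `(0, x₊]`, strictly increasing
on `[x₊, x₋]`, strictly decreasing on `[x₋, ∞)`, with `g(x₊) = ρx₊²(1 − t₊) < 0`,
`g(x₋) = ρx₋² log x₊ > 0`, `g → 0` as `x → 0⁺` and `g → −∞` as `x → ∞`. Consequently,
for `0 < d < ρx₋² log x₊` the set `{x > 0 : g(x) = d}` has exactly two elements — one in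
`(x₊, x₋)`, one in `(x₋, ∞)` — and for `d > ρx₋² log x₊` it is empty. -/
theorem orbit_axis_cuts_hyperbolic (μ ρ : ℝ) (hρ : ρ < 0) (hμ : μ ≠ 0)
    (tp tm : ℝ) (htp : tp < 0) (htm : 1 < tm)
    (hsol : ∀ t : ℝ, μ ^ 2 = ρ * t * (1 - t) ↔ t = tp ∨ t = tm)
    (xp xm : ℝ) (hxp : xp = Real.exp tp) (hxm : xm = Real.exp tm) :
    StrictAntiOn (gfun μ ρ) (Set.Ioc 0 xp) ∧
    StrictMonoOn (gfun μ ρ) (Set.Icc xp xm) ∧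
    StrictAntiOn (gfun μ ρ) (Set.Ici xm) ∧
    (gfun μ ρ xp = ρ * xp ^ 2 * (1 - tp) ∧ gfun μ ρ xp < 0) ∧
    (gfun μ ρ xm = ρ * xm ^ 2 * Real.log xp ∧ 0 < gfun μ ρ xm) ∧
    Filter.Tendsto (gfun μ ρ) (nhdsWithin 0 (Set.Ioi 0)) (nhds 0) ∧
    Filter.Tendsto (gfun μ ρ) Filter.atTop Filter.atBot ∧
    (∀ d : ℝ, 0 < d → d < ρ * xm ^ 2 * Real.log xp →
      ∃ a b : ℝ, a ∈ Set.Ioo xp xm ∧ b ∈ Set.Ioi xm ∧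
        ∀ x : ℝ, 0 < x → (gfun μ ρ x = d ↔ x = a ∨ x = b)) ∧
    (∀ d : ℝ, ρ * xm ^ 2 * Real.log xp < d → ∀ x : ℝ, 0 < x → gfun μ ρ x ≠ d) :=
  orbit_axis_cuts_hyperbolic_general μ ρ hρ tp tm htp htm hsol xp xm hxp hxm
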